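/- arXiv:1806.10966 — 4 statements merged into one kernel-verified Lean document; each statement's English description precedes it below -/
import Mathlib

section
/- For each c < 0, there exists a unique b ∈ (0,∞) with σ(b) = c, and this b satisfies b < 1. -/
/-!
Substituting `u = F⁻¹` gives `σ(F) = 3A (u⁷ - u¹³)`. The map `u ↦ u⁷ - u¹³` is
nonnegative on `[0, 1]`, strictly decreasing on `[1, ∞)` and bounded above there by
`1 - u`, so by the intermediate value theorem it takes each negative value exactly once
on `[0, ∞)`, at a point `u > 1`; then `b = u⁻¹ < 1`.
-/

open Set

section PowSubPow

variable {m n : ℕ} {u v : ℝ}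

lemma pow_sub_pow_nonneg_of_le_one (hmn : m ≤ n) (hu₀ : 0 ≤ u) (hu₁ : u ≤ 1) :
    0 ≤ u ^ m - u ^ n :=
  sub_nonneg.2 (pow_le_pow_of_le_one hu₀ hu₁ hmn)

lemma pow_sub_pow_le_one_sub (hmn : m < n) (hu : 1 ≤ u) : u ^ m - u ^ n ≤ 1 - u := by
  have hm : 1 ≤ u ^ m := one_le_pow₀ hu
  have hn : u ^ m * u ≤ u ^ n := by
    rw [← pow_succ]
    exact pow_le_pow_right₀ hu hmn
  nlinarith

lemma strictAntiOn_pow_sub_pow (hmn : m < n) :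
    StrictAntiOn (fun u : ℝ => u ^ m - u ^ n) (Ici 1) := by
  intro u hu v hv huv
  obtain ⟨k, rfl⟩ := Nat.exists_eq_add_of_lt hmn
  simp only [mem_Ici] at hu hv
  have hum : 0 < u ^ m := by positivity
  have hmono : u ^ m ≤ v ^ m := pow_le_pow_left₀ (by linarith) huv.le m
  have hk : u ^ (k + 1) < v ^ (k + 1) := pow_lt_pow_left₀ huv (by linarith) k.succ_ne_zero
  have hk₁ : 1 ≤ u ^ (k + 1) := one_le_pow₀ hu
  simp only [add_assoc, pow_add u m (k + 1), pow_add v m (k + 1)]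
  nlinarith

lemma exists_pow_sub_pow_eq_of_neg (hmn : m < n) {y : ℝ} (hy : y < 0) :
    ∃ u, 1 < u ∧ u ^ m - u ^ n = y ∧ ∀ v, 0 ≤ v → v ^ m - v ^ n = y → v = u := by
  have hsub : Icc ((1 - y) ^ m - (1 - y) ^ n) ((1 : ℝ) ^ m - 1 ^ n) ⊆
      (fun u : ℝ => u ^ m - u ^ n) '' Icc 1 (1 - y) :=
    intermediate_value_Icc' (by linarith)
      (by fun_prop : Continuous fun u : ℝ => u ^ m - u ^ n).continuousOn
  have hy_mem : y ∈ Icc ((1 - y) ^ m - (1 - y) ^ n) ((1 : ℝ) ^ m - 1 ^ n) := by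
    refine ⟨?_, by simpa using hy.le⟩
    simpa using pow_sub_pow_le_one_sub hmn (u := 1 - y) (by linarith)
  obtain ⟨u, ⟨hu₁, -⟩, hu⟩ := hsub hy_mem
  have one_lt_of_eq : ∀ v, 0 ≤ v → v ^ m - v ^ n = y → 1 < v := fun v hv₀ hv => by
    by_contra! hv₁
    linarith [pow_sub_pow_nonneg_of_le_one hmn.le hv₀ hv₁]
  refine ⟨u, one_lt_of_eq u (by linarith) hu, hu, fun v hv₀ hv => ?_⟩
  exact (strictAntiOn_pow_sub_pow hmn).injOn (one_lt_of_eq v hv₀ hv).le hu₁ (hv.trans hu.symm)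

end PowSubPow

/-- For each `c < 0` there is a unique `b ∈ (0,∞)` with `σ(b) = c`, and `b < 1`. -/
theorem sigma_unique_preimage_neg (A : ℝ) (hA : 0 < A) (σ : ℝ → ℝ)
    (hσ : ∀ F, 0 < F → σ F = 3 * A * (1 / F ^ 7 - 1 / F ^ 13))
    (c : ℝ) (hc : c < 0) :
    ∃ b : ℝ, 0 < b ∧ σ b = c ∧ b < 1 ∧ ∀ b', 0 < b' → σ b' = c → b' = b := by
  have hσ_inv : ∀ F, 0 < F → (σ F = c ↔ F⁻¹ ^ 7 - F⁻¹ ^ 13 = c / (3 * A)) :=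
    fun F hF => by
      rw [hσ F hF, eq_div_iff (by positivity), mul_comm, inv_pow, inv_pow, one_div, one_div]
  obtain ⟨u, hu₁, hu, hu_unique⟩ :=
    exists_pow_sub_pow_eq_of_neg (by norm_num : 7 < 13)
      (div_neg_of_neg_of_pos hc (by positivity : 0 < 3 * A))
  have hu₀ : 0 < u := by linarith
  refine ⟨u⁻¹, inv_pos.2 hu₀, ?_, inv_lt_one_of_one_lt₀ hu₁, fun b' hb' hσb' => ?_⟩
  · rwa [hσ_inv _ (inv_pos.2 hu₀), inv_inv]
  · rw [← hu_unique _ (inv_nonneg.2 hb'.le) ((hσ_inv b' hb').1 hσb'), inv_inv]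
end

section
/- For F₁ < F₂ and F ≥ r* with σ strictly decreasing on [r*, ∞) and chord slopes positive, the chord-slope square roots satisfy s₊(F₁, F) > s₊(F₂, F), where s₊(p, F) = √((σ(p) - σ(F))/(p - F)); consequently the vertical distance d(U₁, U₂) = v₁ - v₂ - (s₊(F₁,F) - s₊(F₂,F))(F - F₁) + s₊(F₂,F)(F₁ - F₂) is negative whenever v₁ < v₂ and F₁ < F₂ < F, so two distinct 2-shock curves from distinct states on W₁(U_l) cannot intersect in the elliptic region. -/
/-!
On `(0, ∞)` the stress `σ` is strictly concave up to `(13/4)^{1/6}`, beyond `r*`, and strictly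
decreasing from `r*` on. Since `σ F₂ < σ F` with `F₂ < F`, the point `F₂` lies left of `r*`.
The chord from `F₂` to `F` is then no steeper than the chord from `F₂` to `min F r*`, which by
concavity is less steep than the chord from `F₁` to `F₂`. The chord from `F₁` to `F` averages the
last one with the chord from `F₂` to `F`, hence is steeper than the latter. Taking square roots
gives the first claim, and every term of `d(U₁, U₂)` is then negative.
-/

open Set Topology

theorem hasDerivAt_const_div_pow (c : ℝ) (n : ℕ) {x : ℝ} (hx : x ≠ 0) :
    HasDerivAt (fun y : ℝ => c / y ^ n) (-(c * n) / x ^ (n + 1)) x := by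
  refine ((hasDerivAt_const x c).fun_div (hasDerivAt_pow n x) (pow_ne_zero n hx)).congr_deriv ?_
  rcases n with _ | n
  · simp
  · rw [Nat.add_sub_cancel]
    field_simp
    ring

noncomputable def ljStress (A x : ℝ) : ℝ := 3 * A * (1 / x ^ 7 - 1 / x ^ 13)

theorem hasDerivAt_ljStress (A : ℝ) {x : ℝ} (hx : x ≠ 0) :
    HasDerivAt (ljStress A) (3 * A * (13 / x ^ 14 - 7 / x ^ 8)) x := by
  refine (((hasDerivAt_const_div_pow 1 7 hx).sub (hasDerivAt_const_div_pow 1 13 hx)).const_mul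
    (3 * A)).congr_deriv ?_
  field_simp
  ring

theorem ljStress_strictAntiOn {A r : ℝ} (hA : 0 < A) (hr : 0 < r) (hr6 : 13 / 7 ≤ r ^ 6) :
    StrictAntiOn (ljStress A) (Ici r) := by
  refine strictAntiOn_of_deriv_neg (convex_Ici r)
    (fun x hx => (hasDerivAt_ljStress A (hr.trans_le hx).ne').continuousAt.continuousWithinAt) ?_
  rw [interior_Ici]
  intro x (hrx : r < x)
  have hx : 0 < x := hr.trans hrx
  have hx6 : 13 / 7 < x ^ 6 := hr6.trans_lt (pow_lt_pow_left₀ hrx hr.le (by norm_num))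
  rw [(hasDerivAt_ljStress A hx.ne').deriv,
    show 13 / x ^ 14 - 7 / x ^ 8 = (13 - 7 * x ^ 6) / x ^ 14 by field_simp]
  exact mul_neg_of_pos_of_neg (by positivity) (div_neg_of_neg_of_pos (by linarith) (by positivity))

theorem ljStress_strictConcaveOn {A c : ℝ} (hA : 0 < A) (hc6 : c ^ 6 ≤ 13 / 4) :
    StrictConcaveOn ℝ (Ioc 0 c) (ljStress A) := by
  refine strictConcaveOn_of_deriv2_neg (convex_Ioc 0 c)
    (fun x hx => (hasDerivAt_ljStress A hx.1.ne').continuousAt.continuousWithinAt) ?_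
  rw [interior_Ioc]
  rintro x ⟨hx, hxc⟩
  have hx6 : x ^ 6 < 13 / 4 := (pow_lt_pow_left₀ hxc hx.le (by norm_num)).trans_le hc6
  have hderiv : deriv (ljStress A) =ᶠ[𝓝 x] fun y => 3 * A * (13 / y ^ 14 - 7 / y ^ 8) :=
    (eventually_ne_nhds hx.ne').mono fun y hy => (hasDerivAt_ljStress A hy).deriv
  have hderiv2 : HasDerivAt (fun y => 3 * A * (13 / y ^ 14 - 7 / y ^ 8))
      (3 * A * ((56 * x ^ 6 - 182) / x ^ 15)) x := by
    refine (((hasDerivAt_const_div_pow 13 14 hx.ne').sub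
      (hasDerivAt_const_div_pow 7 8 hx.ne')).const_mul (3 * A)).congr_deriv ?_
    field_simp
    ring
  rw [Function.iterate_succ_apply', Function.iterate_one, hderiv.deriv_eq, hderiv2.deriv]
  exact mul_neg_of_pos_of_neg (by positivity) (div_neg_of_neg_of_pos (by linarith) (by positivity))

theorem slope_lt_slope_of_slope_lt_slope {f : ℝ → ℝ} {x y z : ℝ} (hxy : x < y) (hyz : y < z)
    (h : slope f y z < slope f x y) : slope f y z < slope f x z := by
  rw [slope_def_field, slope_def_field] at *
  rw [div_lt_div_iff₀ (by linarith) (by linarith)] at *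
  nlinarith

theorem StrictConcaveOn.slope_lt_slope_of_strictAntiOn {f : ℝ → ℝ} {r x y z : ℝ}
    (hconc : StrictConcaveOn ℝ (Icc x r) f) (hanti : StrictAntiOn f (Ici r))
    (hxy : x < y) (hyz : y < z) (hfyz : f y < f z) : slope f y z < slope f x z := by
  have hyr : y < r := by
    by_contra! hry
    exact (hanti hry (hry.trans hyz.le) hyz).not_gt hfyz
  have hconc_slope : ∀ {w}, y < w → w ≤ r → slope f y w < slope f x y := fun hyw hwr => by
    simpa only [slope_def_field] using
      hconc.slope_anti_adjacent ⟨le_rfl, hxy.le.trans hyr.le⟩ ⟨(hxy.trans hyw).le, hwr⟩ hxy hyw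
  refine slope_lt_slope_of_slope_lt_slope hxy hyz ?_
  rcases le_or_gt z r with hzr | hrz
  · exact hconc_slope hyz hzr
  · refine lt_trans ?_ (hconc_slope hyr le_rfl)
    have hfzr : f z < f r := hanti self_mem_Ici hrz.le hrz
    rw [slope_def_field, slope_def_field]
    calc (f z - f y) / (z - y) < (f r - f y) / (z - y) := by gcongr
      _ < (f r - f y) / (r - y) := div_lt_div_of_pos_left (by linarith) (by linarith) (by linarith)

theorem no_self_intersection_general (A : ℝ) (hA : 0 < A) (σ : ℝ → ℝ)
    (hσ : ∀ F, 0 < F → σ F = 3 * A * (1 / F ^ 7 - 1 / F ^ 13))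
    (rstar : ℝ) (hr : rstar = (13 / 7 : ℝ) ^ ((1 : ℝ) / 6))
    (F₁ F₂ F v₁ v₂ : ℝ)
    (h1 : 1 ≤ F₁) (h12 : F₁ < F₂) (h2F : F₂ < F)
    (hv : v₁ < v₂)
    (hs2 : 0 < (σ F₂ - σ F) / (F₂ - F)) :
    Real.sqrt ((σ F₂ - σ F) / (F₂ - F)) < Real.sqrt ((σ F₁ - σ F) / (F₁ - F)) ∧
    v₁ - v₂ -
        (Real.sqrt ((σ F₁ - σ F) / (F₁ - F)) -
          Real.sqrt ((σ F₂ - σ F) / (F₂ - F))) * (F - F₁) +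
        Real.sqrt ((σ F₂ - σ F) / (F₂ - F)) * (F₁ - F₂) < 0 := by
  have hr0 : 0 < rstar := hr ▸ by positivity
  have hr6 : rstar ^ 6 = 13 / 7 := by
    rw [hr, ← Real.rpow_natCast, ← Real.rpow_mul (by norm_num)]
    norm_num
  have hσ_eq : EqOn (ljStress A) σ (Ioi 0) := fun x hx => (hσ x hx).symm
  have hconc : StrictConcaveOn ℝ (Icc F₁ rstar) σ :=
    ((ljStress_strictConcaveOn hA (by rw [hr6]; norm_num)).subset
      (Icc_subset_Ioc (by linarith) le_rfl) (convex_Icc F₁ rstar)).congr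
      (hσ_eq.mono fun x hx => show 0 < x by linarith [hx.1])
  have hanti : StrictAntiOn σ (Ici rstar) :=
    (ljStress_strictAntiOn hA hr0 hr6.ge).congr (hσ_eq.mono (Ici_subset_Ioi.2 hr0))
  have hslope : 0 < slope σ F₂ F := by rwa [slope_comm, slope_def_field]
  have hlt : slope σ F₂ F < slope σ F₁ F :=
    hconc.slope_lt_slope_of_strictAntiOn hanti h12 h2F ((slope_pos_iff_of_le h2F.le).1 hslope)
  rw [slope_comm, slope_def_field, slope_comm σ F₁, slope_def_field] at hlt
  have hsqrt := Real.sqrt_lt_sqrt hs2.le hlt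
  refine ⟨hsqrt, ?_⟩
  have := mul_pos (sub_pos.2 hsqrt) (sub_pos.2 (h12.trans h2F))
  have := mul_pos (Real.sqrt_pos.2 hs2) (sub_pos.2 h12)
  linarith

/-- For `1 ≤ F₁ < F₂ < F` with `F ≥ r*` and `σ` strictly decreasing on `[r*,∞)`,
the chord-slope square roots `s₊(p,F) = √((σ(p)-σ(F))/(p-F))` satisfy
`s₊(F₁,F) > s₊(F₂,F)`; consequently, if `v₁ < v₂`, the vertical distance
`d(U₁,U₂) = v₁ - v₂ - (s₊(F₁,F) - s₊(F₂,F))(F - F₁) + s₊(F₂,F)(F₁ - F₂)`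
is negative, so two 2-shock curves cannot intersect in the elliptic region. -/
theorem no_self_intersection (A : ℝ) (hA : 0 < A) (σ : ℝ → ℝ)
    (hσ : ∀ F, 0 < F → σ F = 3 * A * (1 / F ^ 7 - 1 / F ^ 13))
    (rstar : ℝ) (hr : rstar = (13 / 7 : ℝ) ^ ((1 : ℝ) / 6))
    (F₁ F₂ F v₁ v₂ : ℝ)
    (h1 : 1 ≤ F₁) (h12 : F₁ < F₂) (h2F : F₂ < F) (hF : rstar ≤ F)
    (hv : v₁ < v₂)
    (hs1 : 0 < (σ F₁ - σ F) / (F₁ - F)) (hs2 : 0 < (σ F₂ - σ F) / (F₂ - F)) :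
    Real.sqrt ((σ F₂ - σ F) / (F₂ - F)) < Real.sqrt ((σ F₁ - σ F) / (F₁ - F)) ∧
    v₁ - v₂ -
        (Real.sqrt ((σ F₁ - σ F) / (F₁ - F)) -
          Real.sqrt ((σ F₂ - σ F) / (F₂ - F))) * (F - F₁) +
        Real.sqrt ((σ F₂ - σ F) / (F₂ - F)) * (F₁ - F₂) < 0 :=
  no_self_intersection_general A hA σ hσ rstar hr F₁ F₂ F v₁ v₂ h1 h12 h2F hv hs2
end

section
/- For the viscous semi-discrete system ρ₀ φ_j'' = (1/ΔX)[σ((φ_{j+1}-φ_j)/ΔX) - σ((φ_j - φ_{j-1})/ΔX)] + μ d/dt[(φ_{j+1} - 2φ_j + φ_{j-1})/ΔX²], with μ > 0 and fixed boundary values φ₀ = 0, φ_M = a, the discrete energy E^d satisfies d/dt E^d = -(μ/M)Σ_{j=1}^{M} [d/dt((φ_j - φ_{j-1})/ΔX)]² ≤ 0, so E^d is nonincreasing in t. -/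
/-!
Write `v_j = φ_j'`, `ε_j = (φ_j - φ_{j-1}) / ΔX` and `A_j = σ(ε_j) + μ (v_j - v_{j-1}) / ΔX` for the
total (elastic plus viscous) stress on the `j`-th link. The equation of motion says
`ρ₀ φ_j'' = (A_{j+1} - A_j) / ΔX`, so the kinetic power `ρ₀ Σ v_j φ_j''` is, after summation by
parts (the boundary velocities vanish), `-Σ A_j (v_j - v_{j-1}) / ΔX`. Its elastic part cancels the
potential power `Σ σ(ε_j) (v_j - v_{j-1}) / ΔX`, leaving `-μ Σ ((v_j - v_{j-1}) / ΔX)²`.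
-/

open Finset

section SummationByParts

variable {R : Type*} [CommRing R]

theorem sum_Icc_mul_sub_add_sum_Icc_sub_mul (f A : ℕ → R) (N : ℕ) :
    ∑ j ∈ Icc 1 N, f j * (A (j + 1) - A j) + ∑ j ∈ Icc 1 N, (f j - f (j - 1)) * A j
      = f N * A (N + 1) - f 0 * A 1 := by
  induction N with
  | zero => simp
  | succ n ih =>
    rw [sum_Icc_succ_top (by omega), sum_Icc_succ_top (by omega), Nat.add_sub_cancel]
    linear_combination ih

theorem sum_Icc_mul_sub_eq_neg_of_eq_zero (f A : ℕ → R) {M : ℕ} (h0 : f 0 = 0) (hM : f M = 0) :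
    ∑ j ∈ Icc 1 (M - 1), f j * (A (j + 1) - A j) = -∑ j ∈ Icc 1 M, (f j - f (j - 1)) * A j := by
  cases M with
  | zero => simp
  | succ n =>
    have h := sum_Icc_mul_sub_add_sum_Icc_sub_mul f A n
    rw [Nat.add_sub_cancel, sum_Icc_succ_top (by omega), Nat.add_sub_cancel, hM]
    rw [h0] at h
    linear_combination h

end SummationByParts

theorem HasDerivAt.eq_zero_of_forall_eq {f f' : ℝ → ℝ} {c : ℝ} (hf : ∀ t, HasDerivAt f (f' t) t)
    (hc : ∀ t, f t = c) (t : ℝ) : f' t = 0 :=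
  (hf t).unique ((hasDerivAt_const t c).congr_of_eventuallyEq (Filter.Eventually.of_forall hc))

theorem hasDerivAt_sum_sq {ι : Type*} (s : Finset ι) {v a : ι → ℝ → ℝ} {t : ℝ}
    (hv : ∀ j ∈ s, HasDerivAt (v j) (a j t) t) :
    HasDerivAt (fun t => ∑ j ∈ s, v j t ^ 2) (2 * ∑ j ∈ s, v j t * a j t) t := by
  rw [mul_sum]
  refine HasDerivAt.fun_sum fun j hj => ?_
  simpa [mul_assoc] using (hv j hj).fun_pow 2

theorem hasDerivAt_sum_comp {ι : Type*} (s : Finset ι) {Θ σ : ℝ → ℝ} {g g' : ι → ℝ → ℝ} {t : ℝ}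
    (hΘ : ∀ j ∈ s, HasDerivAt Θ (σ (g j t)) (g j t))
    (hg : ∀ j ∈ s, HasDerivAt (g j) (g' j t) t) :
    HasDerivAt (fun t => ∑ j ∈ s, Θ (g j t)) (∑ j ∈ s, σ (g j t) * g' j t) t :=
  HasDerivAt.fun_sum fun j hj => (hΘ j hj).comp t (hg j hj)

/-- `u`, `v`, `a` are the positions, velocities and accelerations of the nodes at one instant. -/
theorem viscous_chain_power_balance {ρ₀ μ ΔX : ℝ} {M : ℕ} (σ : ℝ → ℝ) (u v a : ℕ → ℝ)
    (hv0 : v 0 = 0) (hvM : v M = 0)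
    (hode : ∀ j ∈ Icc 1 (M - 1), ρ₀ * a j =
      (1 / ΔX) * (σ ((u (j + 1) - u j) / ΔX) - σ ((u j - u (j - 1)) / ΔX))
        + μ * ((v (j + 1) - 2 * v j + v (j - 1)) / ΔX ^ 2)) :
    ρ₀ * ∑ j ∈ Icc 1 (M - 1), v j * a j
        + ∑ j ∈ Icc 1 M, σ ((u j - u (j - 1)) / ΔX) * ((v j - v (j - 1)) / ΔX)
      = -μ * ∑ j ∈ Icc 1 M, ((v j - v (j - 1)) / ΔX) ^ 2 := by
  set A : ℕ → ℝ := fun j => σ ((u j - u (j - 1)) / ΔX) + μ * ((v j - v (j - 1)) / ΔX)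
  have hstress : ∀ j ∈ Icc 1 (M - 1), ρ₀ * (v j * a j) = v j * (A (j + 1) - A j) * ΔX⁻¹ := by
    intro j hj
    rw [mul_left_comm, hode j hj]
    simp only [A, Nat.add_sub_cancel]
    ring
  calc ρ₀ * ∑ j ∈ Icc 1 (M - 1), v j * a j
        + ∑ j ∈ Icc 1 M, σ ((u j - u (j - 1)) / ΔX) * ((v j - v (j - 1)) / ΔX)
      = (∑ j ∈ Icc 1 (M - 1), v j * (A (j + 1) - A j)) * ΔX⁻¹
          + ∑ j ∈ Icc 1 M, σ ((u j - u (j - 1)) / ΔX) * ((v j - v (j - 1)) / ΔX) := by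
        rw [mul_sum, sum_congr rfl hstress, sum_mul]
    _ = ∑ j ∈ Icc 1 M, (-((v j - v (j - 1)) * A j * ΔX⁻¹)
          + σ ((u j - u (j - 1)) / ΔX) * ((v j - v (j - 1)) / ΔX)) := by
        rw [sum_Icc_mul_sub_eq_neg_of_eq_zero v A hv0 hvM, neg_mul, sum_mul, ← sum_neg_distrib,
          ← sum_add_distrib]
    _ = -μ * ∑ j ∈ Icc 1 M, ((v j - v (j - 1)) / ΔX) ^ 2 := by
        rw [mul_sum]
        exact sum_congr rfl fun j _ => by simp only [A]; ring

theorem discrete_energy_dissipation_general (ρ₀ μ a ΔX : ℝ) (M : ℕ)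
    (hμ : 0 < μ) (hΔX : ΔX = 1 / M)
    (Θ σ : ℝ → ℝ) (hΘ : ∀ x, 0 < x → HasDerivAt Θ (σ x) x)
    (φ φ' φ'' : ℕ → ℝ → ℝ)
    (hφ' : ∀ j t, HasDerivAt (φ j) (φ' j t) t)
    (hφ'' : ∀ j t, HasDerivAt (φ' j) (φ'' j t) t)
    (hbc0 : ∀ t, φ 0 t = 0) (hbcM : ∀ t, φ M t = a)
    (hpos : ∀ j, 1 ≤ j → j ≤ M → ∀ t, 0 < φ j t - φ (j - 1) t)
    (hode : ∀ j, 1 ≤ j → j ≤ M - 1 → ∀ t,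
      ρ₀ * φ'' j t =
        (1 / ΔX) * (σ ((φ (j + 1) t - φ j t) / ΔX)
          - σ ((φ j t - φ (j - 1) t) / ΔX))
        + μ * ((φ' (j + 1) t - 2 * φ' j t + φ' (j - 1) t) / ΔX ^ 2))
    (E : ℝ → ℝ)
    (hE : ∀ t, E t = ρ₀ / (2 * M) * ∑ j ∈ Finset.Icc 1 (M - 1), (φ' j t) ^ 2
        + (1 / M) * ∑ j ∈ Finset.Icc 1 M, Θ ((φ j t - φ (j - 1) t) / ΔX)) :
    ∀ t, HasDerivAt E
        (-(μ / M) * ∑ j ∈ Finset.Icc 1 M, ((φ' j t - φ' (j - 1) t) / ΔX) ^ 2) t ∧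
      -(μ / M) * ∑ j ∈ Finset.Icc 1 M, ((φ' j t - φ' (j - 1) t) / ΔX) ^ 2 ≤ 0 := by
  intro t
  have hstrain : ∀ j ∈ Icc 1 M, 0 < (φ j t - φ (j - 1) t) / ΔX := fun j hj => by
    obtain ⟨h1j, hjM⟩ := mem_Icc.1 hj
    have hM : (0 : ℝ) < M := by exact_mod_cast h1j.trans hjM
    exact div_pos (hpos j h1j hjM t) (by rw [hΔX]; positivity)
  have hkin := hasDerivAt_sum_sq (Icc 1 (M - 1)) fun j _ => hφ'' j t
  have hpot := hasDerivAt_sum_comp (Icc 1 M) (g := fun j t => (φ j t - φ (j - 1) t) / ΔX)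
    (g' := fun j t => (φ' j t - φ' (j - 1) t) / ΔX)
    (fun j hj => hΘ _ (hstrain j hj)) fun j _ => ((hφ' j t).fun_sub (hφ' (j - 1) t)).div_const ΔX
  have hbal := viscous_chain_power_balance σ (φ · t) (φ' · t) (φ'' · t)
    (HasDerivAt.eq_zero_of_forall_eq (hφ' 0) hbc0 t) (HasDerivAt.eq_zero_of_forall_eq (hφ' M) hbcM t)
    fun j hj => hode j (mem_Icc.1 hj).1 (mem_Icc.1 hj).2 t
  refine ⟨?_, mul_nonpos_of_nonpos_of_nonneg (neg_nonpos.2 (by positivity))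
    (sum_nonneg fun j _ => sq_nonneg _)⟩
  refine (((hkin.const_mul (ρ₀ / (2 * M))).add (hpot.const_mul (1 / (M : ℝ)))).congr_of_eventuallyEq
    (Filter.Eventually.of_forall hE)).congr_deriv ?_
  linear_combination (1 / (M : ℝ)) * hbal

/-- For the viscous semi-discrete chain
`ρ₀ φ_j'' = (1/ΔX)[σ((φ_{j+1}-φ_j)/ΔX) - σ((φ_j-φ_{j-1})/ΔX)]
  + μ d/dt[(φ_{j+1}-2φ_j+φ_{j-1})/ΔX²]`
with `μ > 0` and fixed boundary values, the discrete energy satisfies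
`d/dt E^d = -(μ/M) Σ_{j=1}^{M} [d/dt((φ_j-φ_{j-1})/ΔX)]² ≤ 0`. -/
theorem discrete_energy_dissipation (ρ₀ μ a ΔX : ℝ) (M : ℕ) (hρ : 0 < ρ₀)
    (hμ : 0 < μ) (hM : 2 ≤ M) (hΔX : ΔX = 1 / M)
    (Θ σ : ℝ → ℝ) (hΘ : ∀ x, 0 < x → HasDerivAt Θ (σ x) x)
    (φ φ' φ'' : ℕ → ℝ → ℝ)
    (hφ' : ∀ j t, HasDerivAt (φ j) (φ' j t) t)
    (hφ'' : ∀ j t, HasDerivAt (φ' j) (φ'' j t) t)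
    (hbc0 : ∀ t, φ 0 t = 0) (hbcM : ∀ t, φ M t = a)
    (hpos : ∀ j, 1 ≤ j → j ≤ M → ∀ t, 0 < φ j t - φ (j - 1) t)
    (hode : ∀ j, 1 ≤ j → j ≤ M - 1 → ∀ t,
      ρ₀ * φ'' j t =
        (1 / ΔX) * (σ ((φ (j + 1) t - φ j t) / ΔX)
          - σ ((φ j t - φ (j - 1) t) / ΔX))
        + μ * ((φ' (j + 1) t - 2 * φ' j t + φ' (j - 1) t) / ΔX ^ 2))
    (E : ℝ → ℝ)
    (hE : ∀ t, E t = ρ₀ / (2 * M) * ∑ j ∈ Finset.Icc 1 (M - 1), (φ' j t) ^ 2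
        + (1 / M) * ∑ j ∈ Finset.Icc 1 M, Θ ((φ j t - φ (j - 1) t) / ΔX)) :
    ∀ t, HasDerivAt E
        (-(μ / M) * ∑ j ∈ Finset.Icc 1 M, ((φ' j t - φ' (j - 1) t) / ΔX) ^ 2) t ∧
      -(μ / M) * ∑ j ∈ Finset.Icc 1 M, ((φ' j t - φ' (j - 1) t) / ΔX) ^ 2 ≤ 0 :=
  discrete_energy_dissipation_general ρ₀ μ a ΔX M hμ hΔX Θ σ hΘ φ φ' φ'' hφ' hφ'' hbc0 hbcM hpos
    hode E hE
end

section
/- If a C¹ solution of the semi-discrete chain satisfies the energy bound E^d(φ(t), φ'(t)) ≤ E⁰ for all t, and the potential Θ satisfies Θ(F) → +∞ as F → 0⁺, then the particle positions never cross: φ_{j-1}(t) < φ_j(t) for all j and all t; consequently 0 ≤ φ_j(t) ≤ a and ‖φ'(t)‖₂² ≤ (2/ρ₀)(E⁰ + |Θ_min|), where Θ_min is the minimum of Θ and ‖φ'‖₂² = (1/M)Σ_{j=1}^{M-1}(φ_j')². -/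
/-!
While all strains `F_j = (φ_j - φ_{j-1}) / ΔX` are positive, the energy bound together with
`Θ ≥ Θmin` bounds each single `Θ (F_j)` by `M E0 - (M - 1) Θmin`; as `Θ` blows up at `0⁺`, each
strain is then at least some `δ > 0`. So the minimal strain, continuous in `t` and positive at
`t = 0`, never takes values in `(0, δ)`, and by the intermediate value theorem it stays `≥ δ`.
Once the strains are positive, the positions are ordered and `Σ Θ (F_j) ≥ M Θmin` turns the energy
bound into the kinetic bound.
-/

open Filter Set
open scoped Finset

lemma monotoneOn_Iic_of_pred_le {α : Type*} [Preorder α] {u : ℕ → α} {M : ℕ}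
    (h : ∀ j, 1 ≤ j → j ≤ M → u (j - 1) ≤ u j) : MonotoneOn u (Iic M) := by
  have hmono : Monotone fun n => u (min n M) := monotone_nat_of_le_succ fun n => by
    rcases lt_or_ge n M with hn | hn
    · simpa [min_eq_left hn.le, min_eq_left (Nat.succ_le_of_lt hn)] using h (n + 1) (by omega) hn
    · rw [min_eq_right hn, min_eq_right (by omega)]
  intro i hi j hj hij
  simpa [min_eq_left (mem_Iic.1 hi), min_eq_left (mem_Iic.1 hj)] using hmono hij

lemma le_of_pos_imp_le_on_Icc {g : ℝ → ℝ} {c t : ℝ} (hg : ContinuousOn g (Icc 0 t))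
    (hc : 0 < c) (h0 : 0 < g 0) (hgap : ∀ τ ∈ Icc 0 t, 0 < g τ → c ≤ g τ) (ht : 0 ≤ t) :
    c ≤ g t := by
  by_contra! hlt
  have hgt : g t ≤ 0 := by
    by_contra! hpos
    exact hlt.not_ge (hgap t ⟨ht, le_rfl⟩ hpos)
  have hc0 := hgap 0 ⟨le_rfl, ht⟩ h0
  obtain ⟨τ, hτ, hgτ⟩ := intermediate_value_Icc' ht hg
    (show c / 2 ∈ Icc (g t) (g 0) from ⟨by linarith, by linarith⟩)
  linarith [hgap τ hτ (by rw [hgτ]; positivity)]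

lemma forall_le_of_pos_imp_le_on_Icc {ι : Type*} {s : Finset ι} {g : ι → ℝ → ℝ} {c t : ℝ}
    (hg : ∀ i ∈ s, ContinuousOn (g i) (Icc 0 t)) (hc : 0 < c) (h0 : ∀ i ∈ s, 0 < g i 0)
    (hgap : ∀ τ ∈ Icc 0 t, (∀ i ∈ s, 0 < g i τ) → ∀ i ∈ s, c ≤ g i τ) (ht : 0 ≤ t) :
    ∀ i ∈ s, c ≤ g i t := by
  intro i hi
  have hne : s.Nonempty := ⟨i, hi⟩
  have hmin : c ≤ s.inf' hne (g · t) :=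
    le_of_pos_imp_le_on_Icc (g := fun τ => s.inf' hne (g · τ))
      (ContinuousOn.finset_inf'_apply hne hg) hc ((Finset.lt_inf'_iff hne).2 h0)
      (fun τ hτ hpos =>
        (Finset.le_inf'_iff hne _).2 (hgap τ hτ ((Finset.lt_inf'_iff hne).1 hpos))) ht
  exact hmin.trans (Finset.inf'_le _ hi)

lemma single_le_sum_sub_card_mul {ι : Type*} {s : Finset ι} {f : ι → ℝ} {m : ℝ}
    (hm : ∀ i ∈ s, m ≤ f i) {k : ι} (hk : k ∈ s) :
    f k ≤ ∑ i ∈ s, f i - (#s - 1) * m := by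
  have h := Finset.single_le_sum (f := fun i => f i - m) (fun i hi => sub_nonneg.2 (hm i hi)) hk
  rw [Finset.sum_sub_distrib, Finset.sum_const, nsmul_eq_mul] at h
  linarith

lemma forall_le_of_sum_le {ι : Type*} {s : Finset ι} {Θ : ℝ → ℝ} {Θmin δ P : ℝ} {F : ι → ℝ}
    (hΘmin : ∀ x, 0 < x → Θmin ≤ Θ x) (hδ : ∀ x ∈ Ioo 0 δ, P - (#s - 1) * Θmin < Θ x)
    (hF : ∀ i ∈ s, 0 < F i) (hP : ∑ i ∈ s, Θ (F i) ≤ P) : ∀ i ∈ s, δ ≤ F i := by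
  intro k hk
  by_contra! hlt
  have := single_le_sum_sub_card_mul (fun i hi => hΘmin (F i) (hF i hi)) hk
  linarith [hδ _ ⟨hF k hk, hlt⟩]

section Energy

variable {ρ₀ M K P E0 : ℝ}

lemma potential_le_of_energy_le (hρ : 0 ≤ ρ₀) (hM : 0 < M) (hK : 0 ≤ K)
    (h : ρ₀ / (2 * M) * K + 1 / M * P ≤ E0) : P ≤ M * E0 := by
  have hkin : 0 ≤ ρ₀ / (2 * M) * K := by positivity
  have : 1 / M * P ≤ E0 := by linarith
  rwa [one_div_mul_eq_div, div_le_iff₀ hM, mul_comm] at this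

lemma kinetic_le_of_energy_le {m : ℝ} (hρ : 0 < ρ₀) (hM : 0 < M) (hP : M * m ≤ P)
    (h : ρ₀ / (2 * M) * K + 1 / M * P ≤ E0) : 1 / M * K ≤ 2 / ρ₀ * (E0 + |m|) := by
  have hpot : m ≤ 1 / M * P := by
    rw [one_div_mul_eq_div, le_div_iff₀ hM, mul_comm]; exact hP
  have hkin : ρ₀ / (2 * M) * K ≤ E0 + |m| := by linarith [neg_abs_le m]
  calc 1 / M * K = 2 / ρ₀ * (ρ₀ / (2 * M) * K) := by field_simp
    _ ≤ 2 / ρ₀ * (E0 + |m|) := by gcongr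

end Energy

theorem no_crossing_and_bounds_general (ρ₀ a ΔX E0 Θmin : ℝ) (M : ℕ) (hρ : 0 < ρ₀)
    (hM : 2 ≤ M) (hΔX : ΔX = 1 / M)
    (Θ : ℝ → ℝ)
    (hΘmin : ∀ x, 0 < x → Θmin ≤ Θ x)
    (hΘblow : Tendsto Θ (nhdsWithin 0 (Set.Ioi 0)) atTop)
    (φ φ' : ℕ → ℝ → ℝ)
    (hφ' : ∀ j t, HasDerivAt (φ j) (φ' j t) t)
    (hbc0 : ∀ t, φ 0 t = 0) (hbcM : ∀ t, φ M t = a)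
    (hinit : ∀ j, 1 ≤ j → j ≤ M → φ (j - 1) 0 < φ j 0)
    (E : ℝ → ℝ)
    (hE : ∀ t, E t = ρ₀ / (2 * M) * ∑ j ∈ Finset.Icc 1 (M - 1), (φ' j t) ^ 2
        + (1 / M) * ∑ j ∈ Finset.Icc 1 M, Θ ((φ j t - φ (j - 1) t) / ΔX))
    (hEbound : ∀ t, 0 ≤ t → E t ≤ E0) :
    ∀ t, 0 ≤ t →
      (∀ j, 1 ≤ j → j ≤ M → φ (j - 1) t < φ j t) ∧
      (∀ j, j ≤ M → 0 ≤ φ j t ∧ φ j t ≤ a) ∧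
      (1 / M) * ∑ j ∈ Finset.Icc 1 (M - 1), (φ' j t) ^ 2
        ≤ 2 / ρ₀ * (E0 + |Θmin|) := by
  have hMpos : (0 : ℝ) < M := by exact_mod_cast (by omega : 0 < M)
  have hΔXpos : 0 < ΔX := hΔX ▸ by positivity
  have hcard : ((#(Finset.Icc 1 M) : ℕ) : ℝ) = M := by simp
  have hφc : ∀ j, Continuous (φ j) := fun j =>
    continuous_iff_continuousAt.2 fun t => (hφ' j t).continuousAt
  have hEt : ∀ t, 0 ≤ t → ρ₀ / (2 * M) * ∑ j ∈ Finset.Icc 1 (M - 1), (φ' j t) ^ 2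
      + (1 / M) * ∑ j ∈ Finset.Icc 1 M, Θ ((φ j t - φ (j - 1) t) / ΔX) ≤ E0 :=
    fun t ht => hE t ▸ hEbound t ht
  obtain ⟨δ, hδ, hΘδ⟩ := mem_nhdsGT_iff_exists_Ioo_subset.1
    (hΘblow.eventually (eventually_gt_atTop (M * E0 - (M - 1) * Θmin)))
  have hstrain : ∀ t, 0 ≤ t → ∀ j ∈ Finset.Icc 1 M, δ ≤ (φ j t - φ (j - 1) t) / ΔX := by
    intro t ht
    refine forall_le_of_pos_imp_le_on_Icc (g := fun j τ => (φ j τ - φ (j - 1) τ) / ΔX)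
      (fun j _ => (((hφc j).sub (hφc (j - 1))).div_const ΔX).continuousOn) hδ
      (fun j hj => ?_) (fun τ hτ hpos => ?_) ht
    · obtain ⟨hj1, hjM⟩ := Finset.mem_Icc.1 hj
      exact div_pos (sub_pos.2 (hinit j hj1 hjM)) hΔXpos
    · refine forall_le_of_sum_le hΘmin (by rw [hcard]; exact hΘδ) hpos ?_
      exact potential_le_of_energy_le hρ.le hMpos (by positivity) (hEt τ hτ.1)
  intro t ht
  have hgap : ∀ j, 1 ≤ j → j ≤ M → φ (j - 1) t < φ j t := fun j hj1 hjM =>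
    sub_pos.1 ((div_pos_iff_of_pos_right hΔXpos).1
      (hδ.trans_le (hstrain t ht j (Finset.mem_Icc.2 ⟨hj1, hjM⟩))))
  have hmono := monotoneOn_Iic_of_pred_le (u := (φ · t)) fun j hj1 hjM => (hgap j hj1 hjM).le
  refine ⟨hgap, fun j hj => ?_, ?_⟩
  · exact ⟨hbc0 t ▸ hmono (Nat.zero_le M) hj (Nat.zero_le j),
      hbcM t ▸ hmono hj (mem_Iic.2 le_rfl) hj⟩
  · refine kinetic_le_of_energy_le hρ hMpos ?_ (hEt t ht)
    rw [← hcard, ← nsmul_eq_mul]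
    exact Finset.card_nsmul_le_sum _ _ _ fun j hj => hΘmin _ (hδ.trans_le (hstrain t ht j hj))

/-- If a C¹ solution of the semi-discrete chain satisfies the energy bound
`E^d(t) ≤ E0` for all `t ≥ 0` and `Θ(F) → +∞` as `F → 0⁺`, then the particles
never cross: `φ_{j-1}(t) < φ_j(t)`; consequently `0 ≤ φ_j(t) ≤ a` and
`‖φ'(t)‖₂² ≤ (2/ρ₀)(E0 + |Θ_min|)`. -/
theorem no_crossing_and_bounds (ρ₀ a ΔX E0 Θmin : ℝ) (M : ℕ) (hρ : 0 < ρ₀)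
    (ha : 0 < a) (hM : 2 ≤ M) (hΔX : ΔX = 1 / M)
    (Θ : ℝ → ℝ) (hΘc : ContinuousOn Θ (Set.Ioi 0))
    (hΘmin : ∀ x, 0 < x → Θmin ≤ Θ x)
    (hΘblow : Tendsto Θ (nhdsWithin 0 (Set.Ioi 0)) atTop)
    (φ φ' : ℕ → ℝ → ℝ)
    (hφ' : ∀ j t, HasDerivAt (φ j) (φ' j t) t)
    (hbc0 : ∀ t, φ 0 t = 0) (hbcM : ∀ t, φ M t = a)
    (hinit : ∀ j, 1 ≤ j → j ≤ M → φ (j - 1) 0 < φ j 0)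
    (E : ℝ → ℝ)
    (hE : ∀ t, E t = ρ₀ / (2 * M) * ∑ j ∈ Finset.Icc 1 (M - 1), (φ' j t) ^ 2
        + (1 / M) * ∑ j ∈ Finset.Icc 1 M, Θ ((φ j t - φ (j - 1) t) / ΔX))
    (hEbound : ∀ t, 0 ≤ t → E t ≤ E0) :
    ∀ t, 0 ≤ t →
      (∀ j, 1 ≤ j → j ≤ M → φ (j - 1) t < φ j t) ∧
      (∀ j, j ≤ M → 0 ≤ φ j t ∧ φ j t ≤ a) ∧
      (1 / M) * ∑ j ∈ Finset.Icc 1 (M - 1), (φ' j t) ^ 2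
        ≤ 2 / ρ₀ * (E0 + |Θmin|) :=
  no_crossing_and_bounds_general ρ₀ a ΔX E0 Θmin M hρ hM hΔX Θ hΘmin hΘblow φ φ' hφ' hbc0 hbcM hinit
    E hE hEbound
end
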